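/- Let G = K_{n₁,…,n_r} be a complete multipartite graph with part sizes n₁ ≥ … ≥ n_t ≥ 2 and n_{t+1} = … = n_r = 1, and let m be its number of edges. Then tmc(G) = m + r − t. -/

import Mathlib

open SimpleGraph

/-- A walk in a total-colored graph is *total monochromatic* if all of its edges and
internal vertices have the same color. -/
def IsTotalMonoWalk {V : Type*} {G : SimpleGraph V} (ce : Sym2 V → ℕ) (cv : V → ℕ)
    {u v : V} (w : G.Walk u v) : Prop :=
  ∃ c, (∀ e ∈ w.edges, ce e = c) ∧ ∀ x ∈ w.support.tail.dropLast, cv x = c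

/-- A total coloring (edge coloring `ce`, vertex coloring `cv`) of `G` is a
*TMC-coloring* if any two vertices are connected by a total monochromatic path. -/
def IsTMCColoring {V : Type*} (G : SimpleGraph V) (ce : Sym2 V → ℕ) (cv : V → ℕ) : Prop :=
  ∀ u v : V, u ≠ v → ∃ w : G.Walk u v, w.IsPath ∧ IsTotalMonoWalk ce cv w

/-- The number of colors used by a total coloring of `G`:
colors appearing on edges of `G` together with colors appearing on vertices. -/
noncomputable def colorsUsed {V : Type*} (G : SimpleGraph V) (ce : Sym2 V → ℕ) (cv : V → ℕ) : ℕ :=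
  (ce '' G.edgeSet ∪ Set.range cv).ncard

/-- The total monochromatic connection number `tmc G`: the maximum number of colors
used in a TMC-coloring of `G`. -/
noncomputable def tmc {V : Type*} [Fintype V] (G : SimpleGraph V) : ℕ :=
  sSup {k | ∃ ce cv, IsTMCColoring G ce cv ∧ colorsUsed G ce cv = k}

/-!
Call a vertex *big* if its part has at least two vertices, and let `B` be the set of big vertices.

Upper bound: a big vertex `u` has a non-neighbour `v`, so a total monochromatic `u`–`v` path
has an inner vertex, and its first edge `u x` and first inner vertex `x` share a color. Charging
`u` to the edge `u x` (or, when `x` also points back at `u`, one of the two to its own vertex)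
yields `|B|` distinct edges and vertices whose colors also occur on uncharged ones, so at most
`m + n - |B|` colors are used.

Lower bound: for every big vertex `w` pick a hub `c w` outside its part, the same for the whole
part. Coloring each hub with all its edges to the vertices it serves in one color and every other
edge and vertex in a color of its own gives a TMC-coloring (non-adjacent vertices lie in a common
part and are joined through its hub) that loses only `|B|` colors.

Hence `tmc G = m + n - |B|`, and `n - |B| = r - t` counts the singleton parts.
-/

open Finset

namespace Finset

variable {α β : Type*} [DecidableEq α] [DecidableEq β]

theorem card_image_add_card_le_of_exists_notMem {f : α → β} {s t : Finset α} (hts : t ⊆ s)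
    (h : ∀ a ∈ t, ∃ b ∈ s, b ∉ t ∧ f b = f a) : #(s.image f) + #t ≤ #s := by
  have himage : s.image f ⊆ (s \ t).image f := by
    intro y hy
    obtain ⟨a, ha, rfl⟩ := mem_image.1 hy
    by_cases hat : a ∈ t
    · obtain ⟨b, hb, hbt, hfb⟩ := h a hat
      exact mem_image.2 ⟨b, mem_sdiff.2 ⟨hb, hbt⟩, hfb⟩
    · exact mem_image_of_mem f (mem_sdiff.2 ⟨ha, hat⟩)
  have := (card_le_card himage).trans card_image_le
  rw [card_sdiff_of_subset hts] at this
  have := card_le_card hts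
  omega

theorem card_le_card_image_add_card {f : α → α} {s t : Finset α}
    (h : ∀ a ∈ s, a ∉ t → f a = a) : #s ≤ #(s.image f) + #t := by
  have hfix : (s \ t).image f = s \ t := by
    calc (s \ t).image f = (s \ t).image id :=
          image_congr fun a ha => h a (mem_sdiff.1 ha).1 (mem_sdiff.1 ha).2
      _ = s \ t := image_id
  calc #s ≤ #(s \ t) + #t := card_le_card_sdiff_add_card
    _ = #((s \ t).image f) + #t := by rw [hfix]
    _ ≤ #(s.image f) + #t := by gcongr; exact sdiff_subset

end Finset

section Walks

variable {V : Type*} {G : SimpleGraph V} {ce : Sym2 V → ℕ} {cv : V → ℕ} {u v : V}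

theorem isTotalMonoWalk_toWalk (h : G.Adj u v) : IsTotalMonoWalk ce cv h.toWalk :=
  ⟨ce s(u, v), by simp, by simp⟩

theorem isTotalMonoWalk_cons_cons {z : V} (huz : G.Adj u z) (hzv : G.Adj z v)
    (hu : ce s(u, z) = cv z) (hv : ce s(z, v) = cv z) :
    IsTotalMonoWalk ce cv (.cons huz (.cons hzv .nil)) :=
  ⟨cv z, by simp [hu, hv], by simp⟩

theorem IsTotalMonoWalk.exists_adj_cv_eq_ce {w : G.Walk u v} (hw : IsTotalMonoWalk ce cv w)
    (hne : u ≠ v) (hnadj : ¬ G.Adj u v) : ∃ x, G.Adj u x ∧ cv x = ce s(u, x) := by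
  match w, hw with
  | .nil, _ => exact (hne rfl).elim
  | .cons h .nil, _ => exact (hnadj h).elim
  | .cons (v := x) h (.cons _ _), ⟨c, hce, hcv⟩ =>
    refine ⟨x, h, (hcv x ?_).trans (hce _ (by simp)).symm⟩
    simp [List.dropLast_cons_of_ne_nil (Walk.support_ne_nil _)]

end Walks

section Counting

variable {V : Type*} [Fintype V] (G : SimpleGraph V) [DecidableRel G.Adj]

theorem colorsUsed_eq_card_image (ce : Sym2 V → ℕ) (cv : V → ℕ) :
    colorsUsed G ce cv = #((G.edgeFinset.disjSum univ).image (Sum.elim ce cv)) := by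
  rw [colorsUsed, ← Set.ncard_coe_finset]
  congr 1
  ext k
  simp [Set.mem_image, Set.mem_union, or_comm, and_comm]

theorem colorsUsed_le (ce : Sym2 V → ℕ) (cv : V → ℕ) :
    colorsUsed G ce cv ≤ #G.edgeFinset + Fintype.card V := by
  rw [colorsUsed_eq_card_image, ← card_univ, ← card_disjSum]
  exact card_image_le

variable {G}

theorem colorsUsed_add_card_le_of_forall_adj [DecidableEq V] {ce : Sym2 V → ℕ} {cv : V → ℕ}
    (B : Finset V) (x : V → V) (hadj : ∀ u ∈ B, G.Adj u (x u))
    (hx : ∀ u ∈ B, cv (x u) = ce s(u, x u)) :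
    colorsUsed G ce cv + #B ≤ #G.edgeFinset + Fintype.card V := by
  -- `ρ` picks one vertex of each vertex color; it breaks the tie when `u` and `x u` point at
  -- each other
  set ρ : V → V := Set.rangeSplitting cv ∘ Set.rangeFactorization cv
  have hρ (v : V) : cv (ρ v) = cv v := Set.apply_rangeSplitting cv _
  have hρ_congr {v w : V} (h : cv v = cv w) : ρ v = ρ w :=
    congrArg (Set.rangeSplitting cv) (Subtype.ext h)
  set F : V → Sym2 V ⊕ V := fun u =>
    if cv u = ce s(u, x u) ∧ ρ u ≠ u then .inr u else .inl s(u, x u)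
  have hF_color (u : V) (hu : u ∈ B) : Sum.elim ce cv (F u) = cv (x u) := by
    by_cases h : cv u = ce s(u, x u) ∧ ρ u ≠ u <;> simp [F, h, hx u hu]
  have hF_inj : Set.InjOn F B := by
    intro u hu u' hu' huu'
    simp only [F] at huu'
    split_ifs at huu' with h h' h'
    · exact Sum.inr.inj huu'
    replace huu' := Sum.inl.inj huu'
    obtain ⟨h1, -⟩ | ⟨h1, h2⟩ := Sym2.eq_iff.1 huu'
    · exact h1
    -- `u` and `u'` point at each other, so both carry the color of the edge between them
    have hcu : cv u = ce s(u, x u) := calc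
      cv u = cv (x u') := by rw [h1]
      _ = ce s(u', x u') := hx u' hu'
      _ = ce s(u, x u) := by rw [huu']
    have hcu' : cv u' = ce s(u', x u') := calc
      cv u' = cv (x u) := by rw [h2]
      _ = ce s(u, x u) := hx u hu
      _ = ce s(u', x u') := by rw [huu']
    calc u = ρ u := (not_and_not_right.1 h hcu).symm
      _ = ρ u' := hρ_congr (by rw [hcu, hcu', huu'])
      _ = u' := not_and_not_right.1 h' hcu'
  have hF_twin : ∀ o ∈ B.image F, ∃ o' ∈ G.edgeFinset.disjSum univ,
      o' ∉ B.image F ∧ Sum.elim ce cv o' = Sum.elim ce cv o := by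
    simp only [mem_image]
    rintro _ ⟨u, hu, rfl⟩
    refine ⟨.inr (ρ (x u)), by simp, ?_, by simp [hρ, hF_color u hu]⟩
    rintro ⟨u', -, hu'⟩
    simp only [F] at hu'
    split_ifs at hu' with h'
    exact h'.2 (Sum.inr.inj hu' ▸ hρ_congr (hρ _))
  have hF_sub : B.image F ⊆ G.edgeFinset.disjSum univ := by
    simp only [subset_iff, mem_image]
    rintro _ ⟨u, hu, rfl⟩
    by_cases h : cv u = ce s(u, x u) ∧ ρ u ≠ u <;> simp [F, h, hadj u hu]
  have := card_image_add_card_le_of_exists_notMem hF_sub hF_twin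
  rwa [card_image_of_injOn hF_inj, card_disjSum, card_univ, ← colorsUsed_eq_card_image] at this

end Counting

section UpperBound

variable {V : Type*} [Fintype V] {G : SimpleGraph V}

theorem IsTMCColoring.colorsUsed_add_card_le [DecidableEq V] [DecidableRel G.Adj]
    {ce : Sym2 V → ℕ} {cv : V → ℕ} (h : IsTMCColoring G ce cv) (B : Finset V)
    (hB : ∀ u ∈ B, ∃ v, u ≠ v ∧ ¬ G.Adj u v) :
    colorsUsed G ce cv + #B ≤ #G.edgeFinset + Fintype.card V := by
  have hx : ∀ u ∈ B, ∃ x, G.Adj u x ∧ cv x = ce s(u, x) := by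
    intro u hu
    obtain ⟨v, huv, hnadj⟩ := hB u hu
    obtain ⟨w, -, hw⟩ := h u v huv
    exact hw.exists_adj_cv_eq_ce huv hnadj
  choose! x hadj hx using hx
  exact colorsUsed_add_card_le_of_forall_adj B x hadj hx

theorem tmc_le {N : ℕ} (h : ∀ ce cv, IsTMCColoring G ce cv → colorsUsed G ce cv ≤ N) :
    tmc G ≤ N :=
  csSup_le' <| by rintro _ ⟨ce, cv, hc, rfl⟩; exact h ce cv hc

theorem IsTMCColoring.colorsUsed_le_tmc {ce : Sym2 V → ℕ} {cv : V → ℕ}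
    (h : IsTMCColoring G ce cv) : colorsUsed G ce cv ≤ tmc G := by
  classical
  refine le_csSup ⟨#G.edgeFinset + Fintype.card V, ?_⟩ ⟨ce, cv, h, rfl⟩
  rintro _ ⟨ce, cv, -, rfl⟩
  exact colorsUsed_le G ce cv

theorem tmc_add_card_le [DecidableEq V] [DecidableRel G.Adj] (B : Finset V)
    (hB : ∀ u ∈ B, ∃ v, u ≠ v ∧ ¬ G.Adj u v) :
    tmc G + #B ≤ #G.edgeFinset + Fintype.card V := by
  have hle : tmc G ≤ #G.edgeFinset + Fintype.card V - #B :=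
    tmc_le fun _ _ h => Nat.le_sub_of_add_le (h.colorsUsed_add_card_le B hB)
  have := card_le_univ B
  omega

end UpperBound

section StarColoring

variable {V : Type*} [DecidableEq V] (B : Finset V) (c : V → V)

/- The colors of the star coloring are representatives in `Sym2 V ⊕ V`: the hub `c w` stands
for itself and its edges to the `w ∈ B` it serves, any other edge or vertex for itself. When two
vertices of `B` are each other's hub, their stars share the edge between them, which then stands
for both stars. -/
def starVertexRep (v : V) : Sym2 V ⊕ V :=
  if v ∈ B ∧ c v ∈ B ∧ c (c v) = v then .inl s(v, c v) else .inr v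

def starEdgeRep (u w : V) : Sym2 V ⊕ V :=
  if w ∈ B ∧ c w = u then starVertexRep B c u
  else if u ∈ B ∧ c u = w then starVertexRep B c w
  else .inl s(u, w)

theorem starEdgeRep_comm (u w : V) : starEdgeRep B c u w = starEdgeRep B c w u := by
  unfold starEdgeRep
  split_ifs with hw hu hu <;> try rfl
  · obtain ⟨hw, rfl⟩ := hw
    obtain ⟨hu, hcu⟩ := hu
    simp [starVertexRep, hu, hw, hcu, Sym2.eq_swap]
  · exact congrArg Sum.inl Sym2.eq_swap

def starRep : Sym2 V ⊕ V → Sym2 V ⊕ V :=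
  Sum.elim (Sym2.lift ⟨starEdgeRep B c, starEdgeRep_comm B c⟩) (starVertexRep B c)

def starCharge (w : V) : Sym2 V ⊕ V :=
  if w ∈ B ∧ c w ∈ B ∧ c (c w) = w then .inr w else .inl s(c w, w)

variable {B c}

theorem starRep_inl_of_mem {w : V} (hw : w ∈ B) :
    starRep B c (.inl s(c w, w)) = starRep B c (.inr (c w)) := by
  simp [starRep, starEdgeRep, hw]

theorem starVertexRep_eq_of_notMem {u w : V} (hw : w ∈ B) (hcw : c w = u)
    (h : .inl s(u, w) ∉ B.image (starCharge B c)) : starVertexRep B c u = .inl s(u, w) := by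
  by_cases hu : u ∈ B ∧ c u = w
  · simp [starVertexRep, hu, hw, hcw]
  · refine (h (mem_image.2 ⟨w, hw, ?_⟩)).elim
    simp only [starCharge, hcw]
    rw [if_neg (by tauto)]

theorem starRep_eq_self {o : Sym2 V ⊕ V} (ho : o ∉ B.image (starCharge B c)) :
    starRep B c o = o := by
  cases o with
  | inl e =>
    induction e using Sym2.ind with
    | h u w =>
      simp only [starRep, Sum.elim_inl, Sym2.lift_mk, starEdgeRep]
      split_ifs with hw hu
      · exact starVertexRep_eq_of_notMem hw.1 hw.2 ho
      · rw [Sym2.eq_swap]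
        exact starVertexRep_eq_of_notMem hu.1 hu.2 (Sym2.eq_swap (a := u) ▸ ho)
      · rfl
  | inr v =>
    simp only [starRep, Sum.elim_inr, starVertexRep]
    split_ifs with hv
    · exact (ho (mem_image.2 ⟨v, hv.1, by simp [starCharge, hv]⟩)).elim
    · rfl

end StarColoring

theorem le_tmc_add_card_of_hub {V : Type*} [Fintype V] [DecidableEq V] {G : SimpleGraph V}
    [DecidableRel G.Adj] (B : Finset V) (c : V → V) (hadj : ∀ w ∈ B, G.Adj (c w) w)
    (hcover : ∀ u v, u ≠ v → ¬ G.Adj u v → u ∈ B ∧ v ∈ B ∧ c u = c v) :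
    #G.edgeFinset + Fintype.card V ≤ tmc G + #B := by
  obtain ⟨enc, henc⟩ := Countable.exists_injective_nat (Sym2 V ⊕ V)
  set col := enc ∘ starRep B c
  have hTMC : IsTMCColoring G (col ∘ .inl) (col ∘ .inr) := by
    intro u v huv
    by_cases h : G.Adj u v
    · exact ⟨h.toWalk, h.isPath_toWalk, isTotalMonoWalk_toWalk h⟩
    obtain ⟨hu, hv, hcuv⟩ := hcover u v huv h
    have hzu := hadj u hu
    have hzv : G.Adj (c u) v := hcuv ▸ hadj v hv
    refine ⟨.cons hzu.symm (.cons hzv .nil), ?_, isTotalMonoWalk_cons_cons _ _ ?_ ?_⟩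
    · simp [Walk.cons_isPath_iff, huv, hzu.ne', hzv.ne]
    · exact congrArg enc (by rw [Sym2.eq_swap]; exact starRep_inl_of_mem hu)
    · exact congrArg enc (by rw [hcuv]; exact starRep_inl_of_mem hv)
  refine le_trans ?_ (Nat.add_le_add_right hTMC.colorsUsed_le_tmc _)
  rw [colorsUsed_eq_card_image, Sum.elim_comp_inl_inr, ← image_image,
    card_image_of_injective _ henc]
  have := card_le_card_image_add_card (s := G.edgeFinset.disjSum univ) (f := starRep B c)
    (fun _ _ ho => starRep_eq_self (B := B) (c := c) ho)
  rw [card_disjSum, card_univ] at this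
  have := card_image_le (s := B) (f := starCharge B c)
  omega

namespace SimpleGraph.completeMultipartiteGraph

variable {ι : Type*} {V : ι → Type*}

theorem exists_ne_not_adj (u : Σ i, V i) [Nontrivial (V u.1)] :
    ∃ v, u ≠ v ∧ ¬ (completeMultipartiteGraph V).Adj u v := by
  obtain ⟨i, a⟩ := u
  obtain ⟨b, hb⟩ := exists_ne a
  exact ⟨⟨i, b⟩, fun h => hb (eq_of_heq (Sigma.mk.inj h).2).symm, by simp⟩

theorem one_lt_card_of_not_adj [∀ i, Fintype (V i)] {u v : Σ i, V i} (huv : u ≠ v)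
    (h : ¬ (completeMultipartiteGraph V).Adj u v) : 1 < Fintype.card (V u.1) := by
  obtain ⟨i, a⟩ := u
  obtain ⟨j, b⟩ := v
  obtain rfl : i = j := by simpa using h
  exact Fintype.one_lt_card_iff.2 ⟨a, b, fun hab => huv (hab ▸ rfl)⟩

end SimpleGraph.completeMultipartiteGraph

open SimpleGraph.completeMultipartiteGraph in
theorem tmc_completeMultipartiteGraph_add_card {ι : Type*} [Fintype ι] [DecidableEq ι]
    (V : ι → Type*) [∀ i, Fintype (V i)] [∀ i, DecidableEq (V i)] :
    tmc (completeMultipartiteGraph V) + #{u : Σ i, V i | 1 < Fintype.card (V u.1)} =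
      (completeMultipartiteGraph V).edgeSet.ncard + Fintype.card (Σ i, V i) := by
  set G := completeMultipartiteGraph V
  set B : Finset (Σ i, V i) := {u | 1 < Fintype.card (V u.1)}
  have hmem {u : Σ i, V i} : u ∈ B ↔ 1 < Fintype.card (V u.1) := by simp [B]
  have hE : G.edgeSet.ncard = #G.edgeFinset := Set.ncard_eq_toFinset_card' _
  refine le_antisymm ?_ ?_
  · have := tmc_add_card_le (G := G) B fun u hu =>
      have := Fintype.one_lt_card_iff_nontrivial.1 (hmem.1 hu); exists_ne_not_adj u
    omega
  rw [hE]
  by_cases hparts : ∃ a b : Σ i, V i, a.1 ≠ b.1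
  · obtain ⟨a, b, hab⟩ := hparts
    refine le_tmc_add_card_of_hub B (fun w => if w.1 = a.1 then b else a) ?_ ?_
    · intro w _
      split_ifs with hw
      · simpa [G, hw] using hab.symm
      · simpa [G] using Ne.symm hw
    · intro u v huv h
      have hfst : u.1 = v.1 := by simpa [G] using h
      refine ⟨hmem.2 (one_lt_card_of_not_adj huv h), hmem.2 ?_, by simp [hfst]⟩
      rw [← hfst]
      exact one_lt_card_of_not_adj huv h
  push Not at hparts
  obtain hB | ⟨u₀, hu₀⟩ := B.eq_empty_or_nonempty
  · refine le_tmc_add_card_of_hub B id (by simp [hB]) fun u v huv h => ?_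
    exact absurd (hmem.2 (one_lt_card_of_not_adj huv h)) (by simp [hB])
  have hB : B = univ := eq_univ_of_forall fun w => hmem.2 (hparts u₀ w ▸ hmem.1 hu₀)
  have hE0 : G.edgeFinset = ∅ := by
    ext e
    induction e using Sym2.ind
    simpa [G] using hparts _ _
  simp [hB, hE0]

theorem stmt8_general (r t : ℕ) (sizes : Fin r → ℕ) (ht : t ≤ r)
    (h2 : ∀ i : Fin r, (i : ℕ) < t → 2 ≤ sizes i)
    (h1 : ∀ i : Fin r, t ≤ (i : ℕ) → sizes i = 1) :
    tmc (SimpleGraph.completeMultipartiteGraph (fun i : Fin r => Fin (sizes i))) =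
      (SimpleGraph.completeMultipartiteGraph (fun i : Fin r => Fin (sizes i))).edgeSet.ncard
        + r - t := by
  have hbig (i : Fin r) : 1 < sizes i ↔ (i : ℕ) < t := by
    by_cases hi : (i : ℕ) < t
    · exact iff_of_true (h2 i hi) hi
    · simp [hi, h1 i (not_lt.1 hi)]
  have hB : ({u | 1 < Fintype.card (Fin (sizes u.1))} : Finset ((i : Fin r) × Fin (sizes i))) =
      ({i | (i : ℕ) < t} : Finset (Fin r)).sigma fun _ => univ := by
    ext u
    simp [hbig]
  have hsingletons : ∑ i : Fin r with ¬ i.val < t, sizes i = r - t := by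
    rw [sum_congr rfl fun i hi => h1 i (not_lt.1 (mem_filter.1 hi).2), sum_const, smul_eq_mul,
      mul_one, filter_not, card_sdiff_of_subset (filter_subset _ _), card_univ, Fintype.card_fin,
      Fin.card_filter_val_lt, min_eq_right ht]
  have hcount := tmc_completeMultipartiteGraph_add_card (fun i : Fin r => Fin (sizes i))
  rw [hB, card_sigma, Fintype.card_sigma,
    ← sum_filter_add_sum_filter_not univ (fun i : Fin r => (i : ℕ) < t)] at hcount
  simp only [card_univ, Fintype.card_fin] at hcount
  omega

theorem stmt8 (r t : ℕ) (sizes : Fin r → ℕ) (ht : t ≤ r)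
    (hmono : ∀ i j : Fin r, i ≤ j → sizes j ≤ sizes i)
    (h2 : ∀ i : Fin r, (i : ℕ) < t → 2 ≤ sizes i)
    (h1 : ∀ i : Fin r, t ≤ (i : ℕ) → sizes i = 1) :
    tmc (SimpleGraph.completeMultipartiteGraph (fun i : Fin r => Fin (sizes i))) =
      (SimpleGraph.completeMultipartiteGraph (fun i : Fin r => Fin (sizes i))).edgeSet.ncard
        + r - t :=
  stmt8_general r t sizes ht h2 h1
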